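/- (Soundness of τ-transition elimination) Let T₀ be an LTS on states S × Γ such that (s,γ) →α (t,γ') implies (γ = γ') ∨ (α = τ ∧ s = t), and such that for all γ, γ' ∈ Γ, (s,γ) →τ (s,γ'). Let T₁ be the LTS on S with s →'α t iff there exists γ with ((s,γ), α, (t,γ)) ∈ →. Then the relation R = {((s,γ), s) | s ∈ S, γ ∈ Γ} is a branching bisimulation between T₀ and T₁; in particular (s₀,γ₀) is branching bisimilar to s₀. -/
import Mathlib

/-- Reflexive-transitive closure of τ-transitions. -/
def TauStar {S L : Type*} (Tr : S → L → S → Prop) (τ : L) : S → S → Prop :=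
  Relation.ReflTransGen (fun s t => Tr s τ t)

/-- `R` is a branching bisimulation for `Tr` with silent action `τ`. -/
def IsBranching {S L : Type*} (Tr : S → L → S → Prop) (τ : L) (R : S → S → Prop) : Prop :=
  ∀ s t, R s t →
    (∀ α s', Tr s α s' → (α = τ ∧ R s' t) ∨
      ∃ t'' t', TauStar Tr τ t t'' ∧ Tr t'' α t' ∧ R s t'' ∧ R s' t') ∧
    (∀ α t', Tr t α t' → (α = τ ∧ R s t') ∨
      ∃ s'' s', TauStar Tr τ s s'' ∧ Tr s'' α s' ∧ R s'' t ∧ R s' t')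

/-- Branching bisimilarity. -/
def BranchingBisimilar {S L : Type*} (Tr : S → L → S → Prop) (τ : L) (s t : S) : Prop :=
  ∃ R, IsBranching Tr τ R ∧ R s t

/-- The reduced transition relation of `T₁`: keep transitions that preserve the topology. -/
def TrRed {S Γ L : Type*} (Tr : S × Γ → L → S × Γ → Prop) (s : S) (α : L) (t : S) : Prop :=
  ∃ γ : Γ, Tr (s, γ) α (t, γ)

/-- Disjoint-union LTS of `T₀` (left) and `T₁` (right). -/
def SumStep {S Γ L : Type*} (Tr : S × Γ → L → S × Γ → Prop) :
    (S × Γ) ⊕ S → L → (S × Γ) ⊕ S → Prop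
  | Sum.inl p, α, Sum.inl q => Tr p α q
  | Sum.inr s, α, Sum.inr t => TrRed Tr s α t
  | _, _, _ => False

/-- The relation matching a state `(s, γ)` of `T₀` with the state `s` of `T₁`. -/
def MatchRel {S Γ L : Type*} (_Tr : S × Γ → L → S × Γ → Prop) :
    (S × Γ) ⊕ S → (S × Γ) ⊕ S → Prop :=
  fun x y => ∃ (s : S) (γ : Γ), x = Sum.inl (s, γ) ∧ y = Sum.inr s

theorem tau_elimination_sound {S Γ L : Type*} (τ : L)
    (Tr : S × Γ → L → S × Γ → Prop)
    (h1 : ∀ (s t : S) (γ γ' : Γ) (α : L),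
      Tr (s, γ) α (t, γ') → γ = γ' ∨ (α = τ ∧ s = t))
    (h2 : ∀ (s : S) (γ γ' : Γ), Tr (s, γ) τ (s, γ')) :
    IsBranching (SumStep Tr) τ (MatchRel Tr) ∧
    ∀ (s₀ : S) (γ₀ : Γ),
      BranchingBisimilar (SumStep Tr) τ (Sum.inl (s₀, γ₀)) (Sum.inr s₀) := by
  have hbr : IsBranching (SumStep Tr) τ (MatchRel Tr) := by
    rintro x y ⟨s, γ, rfl, rfl⟩
    constructor
    · rintro α x' hstep
      match x' with
      | Sum.inr _ => exact absurd hstep (by simp [SumStep])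
      | Sum.inl (t, γ') =>
        have hTr : Tr (s, γ) α (t, γ') := hstep
        rcases h1 s t γ γ' α hTr with rfl | ⟨rfl, rfl⟩
        · right
          refine ⟨Sum.inr s, Sum.inr t, .refl, ⟨γ, hTr⟩, ⟨s, γ, rfl, rfl⟩, ⟨t, γ, rfl, rfl⟩⟩
        · exact Or.inl ⟨rfl, ⟨s, γ', rfl, rfl⟩⟩
    · rintro α y' hstep
      match y' with
      | Sum.inl _ => exact absurd hstep (by simp [SumStep])
      | Sum.inr t =>
        obtain ⟨γ', hTr⟩ : TrRed Tr s α t := hstep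
        right
        refine ⟨Sum.inl (s, γ'), Sum.inl (t, γ'),
          Relation.ReflTransGen.single (h2 s γ γ'), hTr,
          ⟨s, γ', rfl, rfl⟩, ⟨t, γ', rfl, rfl⟩⟩
  exact ⟨hbr, fun s₀ γ₀ => ⟨MatchRel Tr, hbr, ⟨s₀, γ₀, rfl, rfl⟩⟩⟩
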